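/- Let G be a ⟨P2P3⟩-free simple graph and let X ⊆ V(G) be the vertex set of a K_4 in G (four pairwise adjacent vertices). Then every vertex v ∈ V(G) ∖ X is adjacent to at most one vertex of X. -/
import Mathlib


/-- `G` is `H`-free: `G` contains no (not necessarily induced) subgraph isomorphic to `H`,
i.e. there is no injective graph homomorphism from `H` to `G`. -/
def HFree {W V : Type*} (H : SimpleGraph W) (G : SimpleGraph V) : Prop :=
  ¬ ∃ f : H →g G, Function.Injective f

/-- `P₂ ∪ P₃`: the disjoint union of an edge (`0-1`) and a two-edge path (`2-3-4`). -/
def P2P3 : SimpleGraph (Fin 5) :=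
  SimpleGraph.fromRel (fun i j => (i = 0 ∧ j = 1) ∨ (i = 2 ∧ j = 3) ∨ (i = 3 ∧ j = 4))

/-- `⟨P2P3⟩`: the complement of `P₂ ∪ P₃`. -/
def P2P3bar : SimpleGraph (Fin 5) := P2P3ᶜ

lemma key {V : Type*} (G : SimpleGraph V) (hfree : HFree P2P3bar G)
    (x y z w v : V)
    (hxz : G.Adj x z) (hxw : G.Adj x w) (hyz : G.Adj y z) (hyw : G.Adj y w)
    (hzw : G.Adj z w) (hvx : G.Adj v x) (hvy : G.Adj v y)
    (hxy : x ≠ y) (hvz : v ≠ z) (hvw : v ≠ w) : False := by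
  have hP : ∀ i j : Fin 5, P2P3bar.Adj i j ↔
      (i ≠ j ∧ ¬ ((i = 0 ∧ j = 1) ∨ (i = 2 ∧ j = 3) ∨ (i = 3 ∧ j = 4)
        ∨ (j = 0 ∧ i = 1) ∨ (j = 2 ∧ i = 3) ∨ (j = 3 ∧ i = 4))) := by
    intro i j
    simp [P2P3bar, P2P3, SimpleGraph.fromRel, SimpleGraph.compl_adj]
    tauto
  apply hfree
  refine ⟨⟨![x, y, z, v, w], ?_⟩, ?_⟩
  · intro i j h
    rw [hP] at h
    fin_cases i <;> fin_cases j <;>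
      first
        | exact absurd h (by decide)
        | exact hxz | exact hxw | exact hyz | exact hyw | exact hzw
        | exact hvx.symm | exact hvy.symm
        | exact hxz.symm | exact hxw.symm | exact hyz.symm | exact hyw.symm
        | exact hzw.symm | exact hvx | exact hvy
  · have h1 : v ≠ x := hvx.ne
    have h2 : v ≠ y := hvy.ne
    intro i j hij
    fin_cases i <;> fin_cases j <;>
      first
        | rfl
        | exact absurd hij hxy | exact absurd hij (Ne.symm hxy)
        | exact absurd hij hxz.ne | exact absurd hij hxz.ne'
        | exact absurd hij hxw.ne | exact absurd hij hxw.ne'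
        | exact absurd hij hyz.ne | exact absurd hij hyz.ne'
        | exact absurd hij hyw.ne | exact absurd hij hyw.ne'
        | exact absurd hij hzw.ne | exact absurd hij hzw.ne'
        | exact absurd hij h1 | exact absurd hij (Ne.symm h1)
        | exact absurd hij h2 | exact absurd hij (Ne.symm h2)
        | exact absurd hij hvz | exact absurd hij (Ne.symm hvz)
        | exact absurd hij hvw | exact absurd hij (Ne.symm hvw)

theorem stmt_8 {V : Type*} (G : SimpleGraph V) (hfree : HFree P2P3bar G)
    (a b c d : V)
    (hab : G.Adj a b) (hac : G.Adj a c) (had : G.Adj a d)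
    (hbc : G.Adj b c) (hbd : G.Adj b d) (hcd : G.Adj c d)
    (v : V) (hv : v ∉ ({a, b, c, d} : Set V)) :
    ∀ x ∈ ({a, b, c, d} : Set V), ∀ y ∈ ({a, b, c, d} : Set V),
      G.Adj v x → G.Adj v y → x = y := by
  simp only [Set.mem_insert_iff, Set.mem_singleton_iff, not_or] at hv
  obtain ⟨hva, hvb, hvc, hvd⟩ := hv
  intro x hx y hy hvx hvy
  by_contra hne
  simp only [Set.mem_insert_iff, Set.mem_singleton_iff] at hx hy
  rcases hx with rfl | rfl | rfl | rfl <;> rcases hy with rfl | rfl | rfl | rfl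
  · exact hne rfl
  · exact key G hfree x y c d v hac had hbc hbd hcd hvx hvy hne hvc hvd
  · exact key G hfree x y b d v hab had hbc.symm hcd hbd hvx hvy hne hvb hvd
  · exact key G hfree x y b c v hab hac hbd.symm hcd.symm hbc hvx hvy hne hvb hvc
  · exact key G hfree x y c d v hbc hbd hac had hcd hvx hvy hne hvc hvd
  · exact hne rfl
  · exact key G hfree x y a d v hab.symm hbd hac.symm hcd had hvx hvy hne hva hvd
  · exact key G hfree x y a c v hab.symm hbc had.symm hcd.symm hac hvx hvy hne hva hvc
  · exact key G hfree x y b d v hbc.symm hcd hab had hbd hvx hvy hne hvb hvd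
  · exact key G hfree x y a d v hac.symm hcd hab.symm hbd had hvx hvy hne hva hvd
  · exact hne rfl
  · exact key G hfree x y a b v hac.symm hbc.symm had.symm hbd.symm hab hvx hvy hne hva hvb
  · exact key G hfree x y b c v hbd.symm hcd.symm hab hac hbc hvx hvy hne hvb hvc
  · exact key G hfree x y a c v had.symm hcd.symm hab.symm hbc hac hvx hvy hne hva hvc
  · exact key G hfree x y a b v had.symm hbd.symm hac.symm hbc.symm hab hvx hvy hne hva hvb
  · exact hne rfl
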